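/- arXiv:2509.07926 — 7 statements merged into one kernel-verified Lean document; each statement's English description precedes it below -/
import Mathlib

section
/- Let m and k be positive integers with k ≥ 3. Then b(mk,k) ≤ mk − m. Moreover, if D(mk,k) = {1}, then b(mk,k) = mk − m. -/
/-- `A` is a `k`-term cyclic arithmetic progression mod `N` with common difference `d`:
it is a `k`-element subset of `ZMod N` whose elements are `t, t+d, …, t+(k-1)d`. -/
def IsAPWith (N k : ℕ) (A : Finset (ZMod N)) (d : ZMod N) : Prop :=
  A.card = k ∧ ∃ t : ZMod N, A = (Finset.range k).image (fun i : ℕ => t + (i : ZMod N) * d)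

/-- `A` is a `k`-term cyclic arithmetic progression mod `N`. -/
def IsAP (N k : ℕ) (A : Finset (ZMod N)) : Prop :=
  ∃ d : ZMod N, IsAPWith N k A d

/-- `D(N,k)`: the set of values `gcd(d,k)` where `d` ranges over all `d ∈ {1,…,N-1}` that are
a common difference of some `k`-term cyclic arithmetic progression mod `N`. -/
def Ddiff (N k : ℕ) : Set ℕ :=
  {g | ∃ d : ℕ, 1 ≤ d ∧ d ≤ N - 1 ∧
    (∃ A : Finset (ZMod N), IsAPWith N k A (d : ZMod N)) ∧ g = Nat.gcd d k}

/-- `b(N,k)`: the maximum size of a subset of `ZMod N` containing no `k`-term cyclic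
arithmetic progression mod `N`. -/
noncomputable def bNum (N k : ℕ) : ℕ :=
  sSup {n | ∃ B : Finset (ZMod N), B.card = n ∧ ∀ A ⊆ B, ¬ IsAP N k A}

/-- `χ(N,k)`: the minimum number of parts needed to partition `ZMod N` into subsets none of
which contains a `k`-term cyclic arithmetic progression mod `N` (phrased via colorings). -/
noncomputable def chiNum (N k : ℕ) : ℕ :=
  sInf {r | ∃ c : ZMod N → Fin r, ∀ A : Finset (ZMod N), IsAP N k A → ¬ ∃ i, ∀ x ∈ A, c x = i}

/-!
Upper bound: `ℤ/mkℤ` is the disjoint union of the `m` blocks `{jk, jk + 1, …, jk + k - 1}`,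
each a `k`-term progression with difference `1`, so a progression-free set misses a point
of every block.

Lower bound: remove the `m` multiples of `k`, the kernel of `ℤ/mkℤ → ℤ/kℤ`. A `k`-term progression whose difference `d` is
a unit mod `k` runs through every residue class mod `k`, so it contains a multiple of `k`;
the hypothesis `D(mk, k) = {1}` says that every difference is a unit mod `k`.
-/

def APFree (N k : ℕ) (B : Finset (ZMod N)) : Prop :=
  ∀ A ⊆ B, ¬ IsAP N k A

open Finset

section bNum

variable {N k : ℕ}

theorem bNum_le {n : ℕ} (h : ∀ B : Finset (ZMod N), APFree N k B → #B ≤ n) :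
    bNum N k ≤ n :=
  csSup_le' fun _ ⟨B, hB, hfree⟩ => hB ▸ h B hfree

theorem card_le_bNum [NeZero N] {B : Finset (ZMod N)} (hB : APFree N k B) : #B ≤ bNum N k :=
  le_csSup ⟨N, fun _ ⟨B', hB', _⟩ => hB' ▸ (card_le_univ B').trans (ZMod.card N).le⟩
    ⟨B, rfl, hB⟩

end bNum

section UpperBound

variable {m k : ℕ}

def block (m k j : ℕ) : Finset (ZMod (m * k)) :=
  (range k).image fun i => ((j * k + i : ℕ) : ZMod (m * k))

theorem val_natCast_mul_add {i j : ℕ} (hj : j < m) (hi : i < k) :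
    ((j * k + i : ℕ) : ZMod (m * k)).val = j * k + i :=
  ZMod.val_cast_of_lt (by nlinarith)

theorem isAP_block {j : ℕ} (hj : j < m) : IsAP (m * k) k (block m k j) := by
  refine ⟨1, ?_, (j * k : ℕ), ?_⟩
  · refine (card_image_of_injOn fun a ha b hb hab => ?_).trans (card_range k)
    have hval := congrArg ZMod.val hab
    rw [coe_range, Set.mem_Iio] at ha hb
    rw [val_natCast_mul_add hj ha, val_natCast_mul_add hj hb] at hval
    omega
  · unfold block
    congr 1
    funext i
    push_cast
    ring

theorem val_div_eq_of_mem_block {j : ℕ} (hj : j < m) {x : ZMod (m * k)} (hx : x ∈ block m k j) :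
    x.val / k = j := by
  obtain ⟨i, hi, rfl⟩ := mem_image.mp hx
  rw [mem_range] at hi
  rw [val_natCast_mul_add hj hi, add_comm, Nat.add_mul_div_right _ _ (by omega),
    Nat.div_eq_of_lt hi, zero_add]

theorem card_le_of_apFree (hm : 0 < m) (hk : 0 < k) {B : Finset (ZMod (m * k))}
    (hB : APFree (m * k) k B) : #B ≤ m * k - m := by
  have : NeZero (m * k) := ⟨(Nat.mul_pos hm hk).ne'⟩
  have hsurj : Set.SurjOn (fun x : ZMod (m * k) => x.val / k) ↑(univ \ B) ↑(range m) := by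
    intro j hj
    rw [coe_range, Set.mem_Iio] at hj
    obtain ⟨x, hx, hxB⟩ := not_subset.mp fun h => hB _ h (isAP_block hj)
    exact ⟨x, by simpa using hxB, val_div_eq_of_mem_block hj hx⟩
  have hcard := card_le_card_of_surjOn _ hsurj
  rw [card_range, card_sdiff_of_subset (subset_univ B), card_univ, ZMod.card] at hcard
  omega

end UpperBound

theorem card_filter_eq_zero_mul_card_of_surjective {G H F : Type*} [AddGroup G] [Fintype G]
    [AddGroup H] [Fintype H] [DecidableEq H] [FunLike F G H] [AddMonoidHomClass F G H]
    (f : F) (hf : Function.Surjective f) :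
    #{g | f g = 0} * Fintype.card H = Fintype.card G := by
  have hfiber (y : H) : #{g | f g = y} = #{g | f g = 0} :=
    AddMonoidHom.card_fiber_eq_of_mem_range f (hf y) (hf 0)
  calc #{g | f g = 0} * Fintype.card H = ∑ y : H, #{g | f g = y} := by
        simp only [hfiber, sum_const, card_univ, smul_eq_mul, mul_comm]
    _ = Fintype.card G := by
        rw [← card_univ, card_eq_sum_card_fiberwise fun _ _ => mem_univ (f _)]

section LowerBound

variable {N k : ℕ}

theorem card_filter_castHom_eq_zero [NeZero N] [NeZero k] (hkN : k ∣ N) :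
    #{x : ZMod N | ZMod.castHom hkN (ZMod k) x = 0} = N / k := by
  have h := card_filter_eq_zero_mul_card_of_surjective _ (ZMod.castHom_surjective hkN)
  rw [ZMod.card, ZMod.card] at h
  exact (Nat.div_eq_of_eq_mul_left (Nat.pos_of_neZero k) h.symm).symm

theorem IsAPWith.ne_zero {A : Finset (ZMod N)} {d : ZMod N} (hk : 1 < k)
    (hA : IsAPWith N k A d) : d ≠ 0 := by
  rintro rfl
  obtain ⟨hcard, t, rfl⟩ := hA
  simp only [mul_zero, add_zero] at hcard
  rw [image_const (nonempty_range_iff.mpr (by omega)), card_singleton] at hcard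
  omega

theorem IsAPWith.coprime_val [NeZero N] (hD : Ddiff N k = {1}) {A : Finset (ZMod N)}
    {d : ZMod N} (hA : IsAPWith N k A d) (hd : d ≠ 0) : Nat.Coprime d.val k := by
  have hmem : Nat.gcd d.val k ∈ Ddiff N k :=
    ⟨d.val, Nat.pos_of_ne_zero ((ZMod.val_ne_zero d).mpr hd), by have := d.val_lt; omega,
      ⟨A, by rwa [ZMod.natCast_zmod_val]⟩, rfl⟩
  rwa [hD] at hmem

theorem exists_castHom_add_mul_eq_zero [NeZero k] (hkN : k ∣ N) (t d : ZMod N)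
    (hd : IsUnit (ZMod.castHom hkN (ZMod k) d)) :
    ∃ i < k, ZMod.castHom hkN (ZMod k) (t + i * d) = 0 := by
  set φ := ZMod.castHom hkN (ZMod k)
  refine ⟨(-φ t * (φ d)⁻¹).val, ZMod.val_lt _, ?_⟩
  rw [map_add, map_mul, map_natCast, ZMod.natCast_zmod_val, mul_assoc,
    ZMod.inv_mul_of_unit _ hd]
  ring

theorem apFree_compl_filter_castHom_eq_zero [NeZero N] (hkN : k ∣ N) (hk : 1 < k)
    (hD : Ddiff N k = {1}) :
    APFree N k ({x | ZMod.castHom hkN (ZMod k) x = 0} : Finset (ZMod N))ᶜ := by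
  have : NeZero k := ⟨by omega⟩
  rintro A hAB ⟨d, hA⟩
  have hunit : IsUnit (ZMod.castHom hkN (ZMod k) d) := by
    rw [← ZMod.natCast_zmod_val d, map_natCast, ZMod.isUnit_iff_coprime]
    exact hA.coprime_val hD (hA.ne_zero hk)
  obtain ⟨-, t, rfl⟩ := hA
  obtain ⟨i, hi, hzero⟩ := exists_castHom_add_mul_eq_zero hkN t d hunit
  exact mem_compl.mp (hAB (mem_image_of_mem _ (mem_range.mpr hi)))
    (mem_filter.mpr ⟨mem_univ _, hzero⟩)

end LowerBound

theorem stmt_1 (m k : ℕ) (hm : 0 < m) (hk : 3 ≤ k) :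
    bNum (m * k) k ≤ m * k - m ∧
      (Ddiff (m * k) k = {1} → bNum (m * k) k = m * k - m) := by
  have hk0 : 0 < k := by omega
  have : NeZero k := ⟨hk0.ne'⟩
  have : NeZero (m * k) := ⟨(Nat.mul_pos hm hk0).ne'⟩
  have hub : bNum (m * k) k ≤ m * k - m := bNum_le fun _ => card_le_of_apFree hm hk0
  refine ⟨hub, fun hD => hub.antisymm ?_⟩
  have hkN : k ∣ m * k := dvd_mul_left k m
  calc m * k - m = #({x | ZMod.castHom hkN (ZMod k) x = 0} : Finset (ZMod (m * k)))ᶜ := by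
        rw [card_compl, ZMod.card, card_filter_castHom_eq_zero, Nat.mul_div_cancel _ hk0]
    _ ≤ bNum (m * k) k := card_le_bNum (apFree_compl_filter_castHom_eq_zero hkN (by omega) hD)
end

section
/- Let m and k be positive integers with k ≥ 3. Then D(mk,k) = {g ∈ ℤ⁺ : g ≤ m and g divides k}. -/
/-!
A `k`-term progression with difference `d` in `ZMod N` exists exactly when `d` has additive order
`N / gcd(N, d)` at least `k`; for `N = m k` this says `gcd(N, d) ≤ m`. Since `k ∣ N`, `gcd(d, k)`
divides `gcd(N, d)` and so is at most `m`, and conversely a divisor `g ≤ m` of `k` is attained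
by `d = g`.
-/

theorem exists_isAPWith_iff_le_addOrderOf {N k : ℕ} [NeZero N] (d : ZMod N) :
    (∃ A, IsAPWith N k A d) ↔ k ≤ addOrderOf d := by
  constructor
  · rintro ⟨A, hcard, t, rfl⟩
    have hinj : Set.InjOn (fun i : ℕ => t + (i : ZMod N) * d) (Finset.range k) :=
      Finset.card_image_iff.mp (hcard.trans (Finset.card_range k).symm)
    by_contra! hlt
    have hcycle : t + ((addOrderOf d : ℕ) : ZMod N) * d = t + ((0 : ℕ) : ZMod N) * d := by
      rw [← nsmul_eq_mul, addOrderOf_nsmul_eq_zero, Nat.cast_zero, zero_mul]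
    exact (addOrderOf_pos d).ne'
      (hinj (Finset.mem_coe.mpr (Finset.mem_range.mpr hlt))
        (Finset.mem_coe.mpr (Finset.mem_range.mpr (by omega))) hcycle)
  · intro hk
    refine ⟨_, ?_, 0, rfl⟩
    rw [Finset.card_image_of_injOn, Finset.card_range]
    intro i hi j hj hij
    rw [Finset.coe_range, Set.mem_Iio] at hi hj
    exact nsmul_injOn_Iio_addOrderOf (hi.trans_le hk) (hj.trans_le hk)
      (by simpa only [zero_add, nsmul_eq_mul] using hij)

theorem le_addOrderOf_natCast_iff {m k d : ℕ} (hk : 0 < k) (hd : d ≠ 0) :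
    k ≤ addOrderOf (d : ZMod (m * k)) ↔ (m * k).gcd d ≤ m := by
  rw [ZMod.addOrderOf_coe' _ hd,
    Nat.le_div_iff_mul_le (Nat.gcd_pos_of_pos_right _ (Nat.pos_of_ne_zero hd)), mul_comm,
    Nat.mul_le_mul_right_iff hk]

theorem stmt_4_general (m k : ℕ) (hk : 3 ≤ k) :
    Ddiff (m * k) k = {g : ℕ | 0 < g ∧ g ≤ m ∧ g ∣ k} := by
  ext g
  simp only [Ddiff, Set.mem_ofPred_eq]
  constructor
  · rintro ⟨d, hd, hdN, hAP, rfl⟩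
    have : NeZero (m * k) := ⟨by omega⟩
    rw [exists_isAPWith_iff_le_addOrderOf, le_addOrderOf_natCast_iff (by omega) (by omega)] at hAP
    have hdvd : d.gcd k ∣ (m * k).gcd d :=
      Nat.dvd_gcd ((Nat.gcd_dvd_right d k).trans (dvd_mul_left k m)) (Nat.gcd_dvd_left d k)
    exact ⟨Nat.gcd_pos_of_pos_left k hd,
      (Nat.le_of_dvd (Nat.gcd_pos_of_pos_right _ hd) hdvd).trans hAP, Nat.gcd_dvd_right d k⟩
  · rintro ⟨hg, hgm, hgk⟩
    have : NeZero (m * k) := ⟨(Nat.mul_pos (by omega) (by omega)).ne'⟩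
    have hmk : m * 3 ≤ m * k := Nat.mul_le_mul_left m hk
    refine ⟨g, hg, by omega, ?_, (Nat.gcd_eq_left hgk).symm⟩
    rw [exists_isAPWith_iff_le_addOrderOf, le_addOrderOf_natCast_iff (by omega) (by omega),
      Nat.gcd_eq_right (hgk.trans (dvd_mul_left k m))]
    exact hgm

theorem stmt_4 (m k : ℕ) (hm : 0 < m) (hk : 3 ≤ k) :
    Ddiff (m * k) k = {g : ℕ | 0 < g ∧ g ≤ m ∧ g ∣ k} :=
  stmt_4_general m k hk
end

section
/- Let m and k be positive integers with k ≥ 3, let d ∈ D(mk,k), and let A be a k-term cyclic arithmetic progression mod mk with common difference d. Let β ∈ {0,1,…,d−1} be such that every element of A, taken as its representative in {0,1,…,mk−1}, is congruent to β modulo d. Set α := d − β and S := {k−α, 2k−α, …, mk−α} ⊆ Z_{mk}. Then there exists an index j ∈ {1,…,m} such that {jk−α, (j+1)k−α, …, (j+d−1)k−α} (taken modulo mk, with the indices j, j+1, …, j+d−1 taken cyclically modulo m) is a subset of A. -/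
lemma dvd_of_mem_Ddiff {N k g : ℕ} (hg : g ∈ Ddiff N k) : g ∣ k := by
  obtain ⟨d, -, -, -, rfl⟩ := hg
  exact Nat.gcd_dvd_right d k

lemma pos_of_mem_Ddiff {N k g : ℕ} (hg : g ∈ Ddiff N k) : 0 < g := by
  obtain ⟨d, hd, -, -, rfl⟩ := hg
  exact Nat.gcd_pos_of_pos_left k hd

lemma two_le_of_mem_Ddiff {N k g : ℕ} (hg : g ∈ Ddiff N k) : 2 ≤ N := by
  obtain ⟨d, hd, hdN, -⟩ := hg
  omega

lemma add_mul_mem_of_eq_image {N k : ℕ} {A : Finset (ZMod N)} {d t : ZMod N}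
    (hA : A = (Finset.range k).image (fun i : ℕ => t + (i : ZMod N) * d)) {i : ℕ} (hi : i < k) :
    t + (i : ZMod N) * d ∈ A :=
  hA ▸ Finset.mem_image_of_mem _ (Finset.mem_range.mpr hi)

lemma Nat.exists_block_of_lt_mul {q m s : ℕ} (hs : 0 < s) (hq : q < m * s) :
    ∃ j r, 1 ≤ j ∧ j ≤ m ∧ r < s ∧ j * s = q + 1 + r := by
  have := Nat.div_add_mod q s
  have := Nat.mod_lt q hs
  refine ⟨q / s + 1, s - 1 - q % s, Nat.le_add_left 1 _, (Nat.div_lt_iff_lt_mul hs).mpr hq,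
    by omega, ?_⟩
  rw [add_mul, one_mul, mul_comm]
  omega

theorem stmt_8_general (m k : ℕ) (d : ℕ) (hd : d ∈ Ddiff (m * k) k)
    (A : Finset (ZMod (m * k))) (hA : IsAPWith (m * k) k A (d : ZMod (m * k)))
    (β : ℕ) (hAβ : ∀ x ∈ A, x.val % d = β) :
    ∃ j, 1 ≤ j ∧ j ≤ m ∧ ∀ l < d,
      (((j + l) * k : ℕ) : ZMod (m * k)) - ((d - β : ℕ) : ZMod (m * k)) ∈ A := by
  obtain ⟨-, t, hAt⟩ := hA
  have hd0 := pos_of_mem_Ddiff hd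
  have hN := two_le_of_mem_Ddiff hd
  obtain ⟨s, rfl⟩ := dvd_of_mem_Ddiff hd
  have hs : 0 < s := Nat.pos_of_ne_zero (by rintro rfl; simp at hN)
  have : NeZero (m * (d * s)) := ⟨by omega⟩
  set q := t.val / d
  have hβ : t.val % d = β :=
    hAβ t (by simpa using add_mul_mem_of_eq_image hAt (i := 0) (by positivity))
  have hβd : β ≤ d := hβ ▸ (Nat.mod_lt _ hd0).le
  have ht : q * d + β = t.val := hβ ▸ Nat.div_add_mod' t.val d
  have hq : q < m * s := by
    rw [Nat.div_lt_iff_lt_mul hd0]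
    linarith [ZMod.val_lt t]
  obtain ⟨j, r, hj1, hjm, hrs, hjs⟩ := Nat.exists_block_of_lt_mul hs hq
  refine ⟨j, hj1, hjm, fun l hl => ?_⟩
  have hi : r + l * s < d * s := by nlinarith
  convert add_mul_mem_of_eq_image hAt hi using 1
  have hjs' := congrArg (Nat.cast : ℕ → ZMod (m * (d * s))) hjs
  push_cast at hjs'
  rw [← ZMod.natCast_zmod_val t, ← ht]
  push_cast [Nat.cast_sub hβd]
  linear_combination (d : ZMod (m * (d * s))) * hjs'

theorem stmt_8 (m k : ℕ) (hm : 0 < m) (hk : 3 ≤ k) (d : ℕ) (hd : d ∈ Ddiff (m * k) k)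
    (A : Finset (ZMod (m * k))) (hA : IsAPWith (m * k) k A (d : ZMod (m * k)))
    (β : ℕ) (hβ : β < d) (hAβ : ∀ x ∈ A, x.val % d = β) :
    ∃ j, 1 ≤ j ∧ j ≤ m ∧ ∀ l < d,
      (((j + l) * k : ℕ) : ZMod (m * k)) - ((d - β : ℕ) : ZMod (m * k)) ∈ A :=
  stmt_8_general m k d hd A hA β hAβ
end

section
/- Let m and k be positive integers with k ≥ 3. Write D(mk,k) = {d_0 < d_1 < ⋯ < d_j} and set d_{-1} := 0. For each i ∈ {0,…,j}, define F_i := ⋃_{α = d_{i−1}+1}^{d_i} {d_i·k − α, (d_i+1)·k − α, …, m·k − α} ⊆ Z_{mk}. Then for all i₁, i₂ ∈ {0,1,…,j} with i₁ ≠ i₂, F_{i₁} ∩ F_{i₂} = ∅. -/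
/-!
Every element `a k - α` of `F_i` reduces to `-α` modulo `k`, and the offsets `α` of `F_i` lie in
`(d_{i-1}, d_i]`. These intervals are pairwise disjoint and contained in `[1, k]`, since every
element of `D(mk, k)` divides `k`; and distinct numbers of `[1, k]` are distinct modulo `k`.
-/

lemma le_of_mem_Ddiff {N k g : ℕ} (hk : 0 < k) (hg : g ∈ Ddiff N k) : g ≤ k := by
  obtain ⟨d, -, -, -, rfl⟩ := hg
  exact Nat.le_of_dvd hk (Nat.gcd_dvd_right d k)

/-- The paper's `F_i` is `shiftedMultiples m k d_{i-1} d_i`. -/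
def shiftedMultiples (m k lo hi : ℕ) : Finset (ZMod (m * k)) :=
  Finset.image (fun p : ℕ × ℕ => ((p.1 * k - p.2 : ℕ) : ZMod (m * k)))
    ((Finset.Icc hi m) ×ˢ (Finset.Icc (lo + 1) hi))

lemma exists_castHom_eq_neg_of_mem_shiftedMultiples {m k lo hi : ℕ} (hk : 0 < k)
    {x : ZMod (m * k)} (hx : x ∈ shiftedMultiples m k lo hi) :
    ∃ α ∈ Finset.Ioc lo hi, ZMod.castHom (dvd_mul_left k m) (ZMod k) x = -(α : ZMod k) := by
  simp only [shiftedMultiples, Finset.mem_image, Finset.mem_product, Finset.mem_Icc,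
    Prod.exists] at hx
  obtain ⟨a, α, ⟨⟨ha, -⟩, hα, hαa⟩, rfl⟩ := hx
  have hαak : α ≤ a * k := (hαa.trans ha).trans (Nat.le_mul_of_pos_right a hk)
  refine ⟨α, Finset.mem_Ioc.mpr ⟨hα, hαa⟩, ?_⟩
  rw [map_natCast, Nat.cast_sub hαak, Nat.cast_mul, ZMod.natCast_self, mul_zero, zero_sub]

lemma disjoint_shiftedMultiples {m k lo₁ hi₁ lo₂ hi₂ : ℕ} (hk : 0 < k) (h₁₂ : hi₁ ≤ lo₂)
    (h₂k : hi₂ ≤ k) :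
    Disjoint (shiftedMultiples m k lo₁ hi₁) (shiftedMultiples m k lo₂ hi₂) := by
  refine Finset.disjoint_left.mpr fun x hx₁ hx₂ => ?_
  obtain ⟨α₁, hα₁, hx₁⟩ := exists_castHom_eq_neg_of_mem_shiftedMultiples hk hx₁
  obtain ⟨α₂, hα₂, hx₂⟩ := exists_castHom_eq_neg_of_mem_shiftedMultiples hk hx₂
  rw [Finset.mem_Ioc] at hα₁ hα₂
  have hmod : α₁ ≡ α₂ [MOD k] :=
    (ZMod.natCast_eq_natCast_iff _ _ _).mp (neg_inj.mp (hx₁ ▸ hx₂))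
  have hdvd : k ∣ α₂ - α₁ := (Nat.modEq_iff_dvd' (by omega)).mp hmod
  have := Nat.le_of_dvd (by omega) hdvd
  omega

theorem stmt_9_general (m k : ℕ) (hk : 3 ≤ k) (j : ℕ) (e : ℕ → ℕ)
    (hmono : ∀ i ≤ j, e i < e (i + 1))
    (hD : Ddiff (m * k) k = {x | ∃ i, 1 ≤ i ∧ i ≤ j + 1 ∧ x = e i})
    (F : ℕ → Finset (ZMod (m * k)))
    (hF : ∀ i, F i =
      Finset.image (fun p : ℕ × ℕ => ((p.1 * k - p.2 : ℕ) : ZMod (m * k)))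
        ((Finset.Icc (e (i + 1)) m) ×ˢ (Finset.Icc (e i + 1) (e (i + 1))))) :
    ∀ i₁ ≤ j, ∀ i₂ ≤ j, i₁ ≠ i₂ → F i₁ ∩ F i₂ = ∅ := by
  have hk₀ : 0 < k := by omega
  have he_mono : MonotoneOn e (Set.Iic (j + 1)) :=
    (strictMonoOn_Iic_of_lt_succ fun i hi =>
      Order.succ_eq_add_one i ▸ hmono i (by omega)).monotoneOn
  have he_le : ∀ i ≤ j, e (i + 1) ≤ k := fun i hi =>
    le_of_mem_Ddiff (N := m * k) hk₀ (by rw [hD]; exact ⟨i + 1, by omega, by omega, rfl⟩)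
  have hlt : ∀ i₁ i₂, i₁ < i₂ → i₂ ≤ j → F i₁ ∩ F i₂ = ∅ := fun i₁ i₂ h₁₂ hi₂ =>
    Finset.disjoint_iff_inter_eq_empty.mp <| hF i₁ ▸ hF i₂ ▸
      disjoint_shiftedMultiples hk₀
        (he_mono (Set.mem_Iic.mpr (by omega)) (Set.mem_Iic.mpr (by omega)) h₁₂) (he_le i₂ hi₂)
  intro i₁ hi₁ i₂ hi₂ hne
  rcases lt_or_gt_of_ne hne with h | h
  · exact hlt i₁ i₂ h hi₂
  · rw [Finset.inter_comm]
    exact hlt i₂ i₁ h hi₁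

theorem stmt_9 (m k : ℕ) (hm : 0 < m) (hk : 3 ≤ k) (j : ℕ) (e : ℕ → ℕ)
    (he0 : e 0 = 0)
    (hmono : ∀ i ≤ j, e i < e (i + 1))
    (hD : Ddiff (m * k) k = {x | ∃ i, 1 ≤ i ∧ i ≤ j + 1 ∧ x = e i})
    (F : ℕ → Finset (ZMod (m * k)))
    (hF : ∀ i, F i =
      Finset.image (fun p : ℕ × ℕ => ((p.1 * k - p.2 : ℕ) : ZMod (m * k)))
        ((Finset.Icc (e (i + 1)) m) ×ˢ (Finset.Icc (e i + 1) (e (i + 1))))) :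
    ∀ i₁ ≤ j, ∀ i₂ ≤ j, i₁ ≠ i₂ → F i₁ ∩ F i₂ = ∅ :=
  stmt_9_general m k hk j e hmono hD F hF
end

section
/- Let k ≥ 3 be an integer. Then 2 ≤ χ(k²,k) ≤ 3. -/
/-!
Let `π : ℤ/k² → ℤ/k` be reduction. Colour `x` by whether `π x` lies in the lower or the upper half
of `ℤ/k`, except that one marked point in every fibre of `π` gets a third colour. A `k`-term
progression whose difference is divisible by `k` is a whole fibre, so it contains its marked point
and an unmarked one. Otherwise its image under `π` is a coset of a nontrivial subgroup `gℤ/k`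
(`g = gcd(π d, k) ≤ k/2`), which meets both halves; so it can only be monochromatic if it consists
of marked points, i.e. if it is the transversal `{1, …, k - 1, 2k}`. For `k ≥ 4` it is not: the index
gap `w` between `1` and `2` inverts the difference, so `w (k - 2)` and `w (2k - 1)` would be index
gaps as well, of absolute value `< k` modulo `k²`, which is impossible. For `k = 3` an explicit
colouring is checked. The lower bound holds because `{0, …, k - 1}` is a progression.
-/

open Finset

def IsAPFreeColoring {N r : ℕ} (k : ℕ) (c : ZMod N → Fin r) : Prop :=
  ∀ A : Finset (ZMod N), IsAP N k A → ¬ ∃ i, ∀ x ∈ A, c x = i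

def progression {N : ℕ} (k : ℕ) (t d : ZMod N) : Finset (ZMod N) :=
  (range k).image fun i : ℕ => t + i * d

theorem mem_progression {N k : ℕ} {t d x : ZMod N} :
    x ∈ progression k t d ↔ ∃ i < k, t + i * d = x := by
  simp [progression]

theorem chiNum_le_of_isAPFreeColoring {N k r : ℕ} {c : ZMod N → Fin r}
    (hc : IsAPFreeColoring k c) : chiNum N k ≤ r :=
  Nat.sInf_le ⟨c, hc⟩

theorem card_progression_zero_one {N k : ℕ} [NeZero N] (hkN : k ≤ N) :
    #(progression k (0 : ZMod N) 1) = k := by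
  rw [progression, card_image_of_injOn, card_range]
  intro a ha b hb hab
  simp only [coe_range, Set.mem_Iio, zero_add, mul_one] at ha hb hab
  simpa [ZMod.val_cast_of_lt (ha.trans_le hkN), ZMod.val_cast_of_lt (hb.trans_le hkN)]
    using congrArg ZMod.val hab

theorem two_le_of_isAPFreeColoring {N k r : ℕ} [NeZero N] (hkN : k ≤ N) {c : ZMod N → Fin r}
    (hc : IsAPFreeColoring k c) : 2 ≤ r := by
  by_contra! hr
  interval_cases r
  · exact (c 0).elim0
  · exact hc _ ⟨1, card_progression_zero_one hkN, 0, rfl⟩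
      ⟨0, fun _ _ => Subsingleton.elim _ _⟩

theorem two_le_chiNum_of_isAPFreeColoring {N k r : ℕ} [NeZero N] (hkN : k ≤ N)
    {c : ZMod N → Fin r} (hc : IsAPFreeColoring k c) : 2 ≤ chiNum N k :=
  le_csInf ⟨r, c, hc⟩ fun _ ⟨_, hc'⟩ => two_le_of_isAPFreeColoring hkN hc'

namespace ZMod

variable {k : ℕ} [NeZero k]

theorem exists_natCast_mul_eq_gcd_mul (h w : ZMod k) :
    ∃ j < k, (j : ZMod k) * h = (Nat.gcd h.val k : ℕ) * w := by
  have hgcd : ((Nat.gcd h.val k : ℕ) : ZMod k) = h * (Nat.gcdA h.val k : ZMod k) := by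
    have := congrArg (fun z : ℤ => (z : ZMod k)) (Nat.gcd_eq_gcd_ab h.val k)
    simpa [natCast_self] using this
  exact ⟨((Nat.gcdA h.val k : ZMod k) * w).val, val_lt _, by
    rw [natCast_zmod_val, hgcd]; ring⟩

theorem exists_val_add_natCast_mul_lt_half_and_half_le {g : ℕ} (hg : 0 < g) (hgk : g ≤ k / 2)
    (x : ZMod k) : ∃ w₁ w₂ : ZMod k,
      (x + g * w₁).val < k / 2 ∧ k / 2 ≤ (x + g * w₂).val := by
  have hx : x = ((g * (x.val / g) + x.val % g : ℕ) : ZMod k) := by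
    rw [Nat.div_add_mod, natCast_zmod_val]
  have hrem : x.val % g < g := Nat.mod_lt _ hg
  refine ⟨-(x.val / g : ℕ), -(x.val / g : ℕ) - 1, ?_, ?_⟩
  · have : x + g * -(x.val / g : ℕ) = ((x.val % g : ℕ) : ZMod k) := by
      nth_rw 1 [hx]; push_cast; ring
    rw [this, val_cast_of_lt (by omega)]
    omega
  · have : x + g * (-(x.val / g : ℕ) - 1) = ((x.val % g + (k - g) : ℕ) : ZMod k) := by
      nth_rw 1 [hx]; push_cast [Nat.cast_sub (show g ≤ k by omega), natCast_self]; ring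
    rw [this, val_cast_of_lt (by omega)]
    omega

theorem exists_val_add_mul_lt_half_and_half_le {h : ZMod k} (hh : h ≠ 0) (x : ZMod k) :
    ∃ i < k, ∃ j < k, (x + i * h).val < k / 2 ∧ k / 2 ≤ (x + j * h).val := by
  set g := Nat.gcd h.val k
  have hval : 0 < h.val := Nat.pos_of_ne_zero ((val_eq_zero h).not.2 hh)
  have hg : 0 < g := Nat.gcd_pos_of_pos_left _ hval
  have hg_half : g ≤ k / 2 := by
    obtain ⟨m, hm⟩ := Nat.gcd_dvd_right h.val k
    have : g < k := (Nat.le_of_dvd hval (Nat.gcd_dvd_left _ _)).trans_lt (val_lt h)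
    have : 2 ≤ m := by
      by_contra!
      interval_cases m <;> omega
    rw [Nat.le_div_iff_mul_le two_pos]
    nlinarith
  obtain ⟨w₁, w₂, h₁, h₂⟩ := exists_val_add_natCast_mul_lt_half_and_half_le hg hg_half x
  obtain ⟨i, hi, hi'⟩ := exists_natCast_mul_eq_gcd_mul h w₁
  obtain ⟨j, hj, hj'⟩ := exists_natCast_mul_eq_gcd_mul h w₂
  exact ⟨i, hi, j, hj, hi' ▸ h₁, hj' ▸ h₂⟩

end ZMod

namespace CyclicAP

variable {k : ℕ}

def reduce (k : ℕ) : ZMod (k ^ 2) →+* ZMod k :=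
  ZMod.castHom (dvd_pow_self k two_ne_zero) (ZMod k)

theorem val_reduce [NeZero k] (x : ZMod (k ^ 2)) : (reduce k x).val = x.val % k := by
  rw [reduce, ZMod.castHom_apply, ZMod.cast_eq_val, ZMod.val_natCast]

theorem card_fiber_reduce_le [NeZero k] (r : ZMod k) : #{x | reduce k x = r} ≤ k := by
  calc #{x | reduce k x = r} ≤ #(range k) := by
        refine card_le_card_of_injOn (fun x => x.val / k) (fun x _ => ?_) fun x hx y hy hxy => ?_
        · simpa using Nat.div_lt_of_lt_mul (by simpa [sq] using ZMod.val_lt x)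
        · simp only [coe_filter, mem_univ, true_and, Set.mem_ofPred_eq] at hx hy
          have hmod : x.val % k = y.val % k := by rw [← val_reduce, ← val_reduce, hx, hy]
          apply ZMod.val_injective
          rw [← Nat.div_add_mod x.val k, ← Nat.div_add_mod y.val k, hmod]
          exact congrArg (k * · + _) hxy
    _ = k := card_range k

theorem reduce_progression (t d : ZMod (k ^ 2)) (i : ℕ) :
    reduce k (t + (i : ZMod (k ^ 2)) * d) = reduce k t + i * reduce k d := by
  simp only [map_add, map_mul, map_natCast]

theorem progression_eq_fiber [NeZero k] {t d : ZMod (k ^ 2)} (hd : reduce k d = 0)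
    (hcard : #(progression k t d) = k) :
    progression k t d = ({x | reduce k x = reduce k t} : Finset _) := by
  refine eq_of_subset_of_card_le (fun x hx => ?_) (hcard.symm ▸ card_fiber_reduce_le _)
  obtain ⟨i, -, rfl⟩ := mem_progression.1 hx
  simp only [mem_filter, mem_univ, true_and, reduce_progression, hd, mul_zero, add_zero]

/-- The marked point of the fibre of `reduce k` over `r`. The marked points form the transversal
`{1, …, k - 1, 2k}`, which for `k ≥ 4` is not a `k`-term progression. -/
def marker (k : ℕ) (r : ZMod k) : ZMod (k ^ 2) :=
  if r = 0 then ((2 * k : ℕ) : ZMod (k ^ 2)) else (r.val : ZMod (k ^ 2))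

theorem reduce_marker [NeZero k] (r : ZMod k) : reduce k (marker k r) = r := by
  unfold marker
  split_ifs with hr
  · simp [hr]
  · rw [map_natCast, ZMod.natCast_zmod_val]

theorem marker_natCast {a : ℕ} (ha : 0 < a) (hak : a < k) : marker k a = a := by
  have : (a : ZMod k) ≠ 0 := by
    rw [Ne, ZMod.natCast_eq_zero_iff]
    exact Nat.not_dvd_of_pos_of_lt ha hak
  rw [marker, if_neg this, ZMod.val_cast_of_lt hak]

def coloring (k : ℕ) (x : ZMod (k ^ 2)) : Fin 3 :=
  if x = marker k (reduce k x) then 2 else if (reduce k x).val < k / 2 then 0 else 1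

theorem coloring_eq_two_iff {x : ZMod (k ^ 2)} :
    coloring k x = 2 ↔ x = marker k (reduce k x) := by
  unfold coloring
  split_ifs with h
  exacts [iff_of_true rfl h, iff_of_false (by decide) h, iff_of_false (by decide) h]

theorem not_modEq_mul_two_mul_sub_one (hk : 4 ≤ k) {w a b : ℤ} (hw₀ : w ≠ 0) (hw : |w| < k)
    (ha : |a| < k) (hb : |b| < k) (hwa : w * (k - 2) ≡ a [ZMOD k ^ 2]) :
    ¬ w * (2 * k - 1) ≡ b [ZMOD k ^ 2] := by
  intro hwb
  have hk' : (4 : ℤ) ≤ k := by exact_mod_cast hk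
  rw [abs_lt] at hw ha hb
  have ha' : a - w * (k - 2) = 0 :=
    Int.eq_zero_of_abs_lt_dvd hwa.dvd (by rw [abs_lt]; constructor <;> nlinarith)
  have hw₁ : w = 1 ∨ w = -1 := by
    rcases lt_trichotomy w 0 with h | h | h
    · right; nlinarith
    · exact absurd h hw₀
    · left; nlinarith
  have hb' : b - w * (2 * k - 1) = 0 := Int.eq_zero_of_abs_lt_dvd hwb.dvd <| by
    rcases hw₁ with rfl | rfl <;> rw [abs_lt] <;> constructor <;> nlinarith
  rcases hw₁ with rfl | rfl <;> linarith

theorem not_forall_eq_marker [NeZero k] (hk : 4 ≤ k) {t d : ZMod (k ^ 2)}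
    (hcard : #(progression k t d) = k) :
    ¬ ∀ x ∈ progression k t d, x = marker k (reduce k x) := by
  intro h
  have hsub : progression k t d ⊆ univ.image (marker k) := fun x hx =>
    mem_image.2 ⟨_, mem_univ _, (h x hx).symm⟩
  have hall : univ.image (marker k) ⊆ progression k t d :=
    (eq_of_subset_of_card_le hsub (card_image_le.trans (by simp [hcard]))).ge
  have hmem (r : ZMod k) : ∃ i < k, t + i * d = marker k r :=
    mem_progression.1 (hall (mem_image_of_mem _ (mem_univ r)))
  obtain ⟨i₀, hi₀, h₀⟩ := hmem 0
  obtain ⟨i₁, hi₁, h₁⟩ := hmem (1 : ℕ)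
  obtain ⟨i₂, hi₂, h₂⟩ := hmem (2 : ℕ)
  obtain ⟨i₃, hi₃, h₃⟩ := hmem (k - 1 : ℕ)
  rw [marker, if_pos rfl] at h₀
  rw [marker_natCast (by omega) (by omega)] at h₁ h₂ h₃
  push_cast [Nat.cast_sub (show 1 ≤ k by omega)] at h₀ h₁ h₂ h₃
  have hw : ((i₂ : ZMod (k ^ 2)) - i₁) * d = 1 := by linear_combination h₂ - h₁
  have hw₀ : (i₂ - i₁ : ℤ) ≠ 0 := by
    have : Fact (1 < k ^ 2) := ⟨by nlinarith⟩
    intro hw₀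
    rw [show i₂ = i₁ by omega, sub_self, zero_mul] at hw
    exact zero_ne_one hw
  have hsmall {i j : ℕ} (hi : i < k) (hj : j < k) : |(i - j : ℤ)| < k :=
    abs_sub_lt_iff.2 ⟨by omega, by omega⟩
  refine not_modEq_mul_two_mul_sub_one hk hw₀ (hsmall hi₂ hi₁) (hsmall hi₃ hi₁) (hsmall hi₀ hi₁)
    ((ZMod.intCast_eq_intCast_iff _ _ _).1 ?_) ((ZMod.intCast_eq_intCast_iff _ _ _).1 ?_)
  · push_cast
    linear_combination (↑i₃ - ↑i₁ : ZMod (k ^ 2)) * hw - (↑i₂ - ↑i₁ : ZMod (k ^ 2)) * (h₃ - h₁)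
  · push_cast
    linear_combination (↑i₀ - ↑i₁ : ZMod (k ^ 2)) * hw - (↑i₂ - ↑i₁ : ZMod (k ^ 2)) * (h₀ - h₁)

theorem not_monochromatic_of_reduce_eq_zero [NeZero k] (hk : 2 ≤ k) {t d : ZMod (k ^ 2)}
    (hd : reduce k d = 0) (hcard : #(progression k t d) = k) :
    ¬ ∃ c, ∀ x ∈ progression k t d, coloring k x = c := by
  rintro ⟨c, hc⟩
  have hfiber := progression_eq_fiber hd hcard
  have hm : marker k (reduce k t) ∈ progression k t d := by
    simp [hfiber, reduce_marker]
  obtain ⟨y, hy, hym⟩ :=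
    exists_mem_ne (by omega : 1 < #(progression k t d)) (marker k (reduce k t))
  have hyt : reduce k y = reduce k t := by
    rw [hfiber] at hy
    exact (mem_filter.1 hy).2
  have hcm : coloring k (marker k (reduce k t)) = 2 :=
    coloring_eq_two_iff.2 (by rw [reduce_marker])
  have hcy : coloring k y = 2 := (hc y hy).trans ((hc _ hm).symm.trans hcm)
  exact hym (hyt ▸ coloring_eq_two_iff.1 hcy)

theorem not_monochromatic_of_reduce_ne_zero [NeZero k] (hk : 4 ≤ k) {t d : ZMod (k ^ 2)}
    (hd : reduce k d ≠ 0) (hcard : #(progression k t d) = k) :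
    ¬ ∃ c, ∀ x ∈ progression k t d, coloring k x = c := by
  rintro ⟨c, hc⟩
  by_cases hc2 : c = 2
  · subst hc2
    exact not_forall_eq_marker hk hcard fun x hx => coloring_eq_two_iff.1 (hc x hx)
  obtain ⟨i, hi, j, hj, hlow, hhigh⟩ :=
    ZMod.exists_val_add_mul_lt_half_and_half_le hd (reduce k t)
  have hcolor {x} (hx : x ∈ progression k t d) :
      coloring k x = if (reduce k x).val < k / 2 then 0 else 1 := by
    rw [coloring, if_neg fun h => hc2 (hc x hx ▸ coloring_eq_two_iff.2 h)]
  have hxi : t + i * d ∈ progression k t d := mem_progression.2 ⟨i, hi, rfl⟩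
  have hxj : t + j * d ∈ progression k t d := mem_progression.2 ⟨j, hj, rfl⟩
  have h0 := (hcolor hxi).symm.trans (hc _ hxi)
  have h1 := (hcolor hxj).symm.trans (hc _ hxj)
  rw [reduce_progression, if_pos hlow] at h0
  rw [reduce_progression, if_neg (not_lt.2 hhigh)] at h1
  exact absurd (h0.trans h1.symm) (by decide)

theorem isAPFreeColoring_coloring (hk : 4 ≤ k) : IsAPFreeColoring k (coloring k) := by
  rintro A ⟨d, hcard, t, rfl⟩
  have : NeZero k := ⟨by omega⟩
  by_cases hd : reduce k d = 0
  exacts [not_monochromatic_of_reduce_eq_zero (by omega) hd hcard,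
    not_monochromatic_of_reduce_ne_zero hk hd hcard]

/-- For `k = 3` the marked transversal `{1, 2, 6}` is itself a progression (`1, 6, 11 ≡ 2`), so a
different colouring is used, checked against all progressions. -/
def coloringNine : ZMod (3 ^ 2) → Fin 3 := ![0, 0, 1, 0, 0, 1, 1, 2, 2]

theorem isAPFreeColoring_coloringNine : IsAPFreeColoring 3 coloringNine := by
  rintro A ⟨d, hcard, t, rfl⟩
  revert t d
  decide

theorem exists_isAPFreeColoring (hk : 3 ≤ k) :
    ∃ c : ZMod (k ^ 2) → Fin 3, IsAPFreeColoring k c := by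
  rcases hk.eq_or_lt with rfl | hk
  exacts [⟨coloringNine, isAPFreeColoring_coloringNine⟩, ⟨coloring k, isAPFreeColoring_coloring hk⟩]

end CyclicAP

theorem stmt_15 (k : ℕ) (hk : 3 ≤ k) :
    2 ≤ chiNum (k ^ 2) k ∧ chiNum (k ^ 2) k ≤ 3 := by
  have : NeZero k := ⟨by omega⟩
  obtain ⟨c, hc⟩ := CyclicAP.exists_isAPFreeColoring hk
  exact ⟨two_le_chiNum_of_isAPFreeColoring (by nlinarith) hc, chiNum_le_of_isAPFreeColoring hc⟩
end

section
/- Let k ≥ 3 be an integer. Then W_c(k,2) > k(k−1); equivalently, there exists an integer M ≥ k(k−1) and a 2-coloring of Z_M with no monochromatic k-term cyclic arithmetic progression mod M, for every candidate value N ≤ k(k−1) of W_c(k,2). -/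
/-!
Colour `x ∈ ℤ/2b²ℤ`, where `b = k - 1`, by which half of `ℤ/2bℤ` contains `x mod 2b`. The image of a
`k`-term progression in `ℤ/2bℤ` is a progression `y, y + e, …, y + b e` with `b + 1` terms. If all
of them lie in one half, an interval of length `b`, then lifting them to integers in that interval
makes every step the same integer `δ` (two steps are congruent mod `2b` and each is smaller than `b`
in absolute value), and `|b δ| < b` forces `δ = 0`, i.e. `e = 0`. But then `b d = 0`
in `ℤ/2b²ℤ`, so the progression has at most `b < k` distinct terms.
-/

theorem Finset.card_image_range_le_of_natCast_mul_eq_zero {R : Type*} [Ring R] [DecidableEq R]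
    (t d : R) (k : ℕ) {m : ℕ} (hm : 0 < m) (h : (m : R) * d = 0) :
    ((Finset.range k).image fun i : ℕ => t + i * d).card ≤ m := by
  calc _ ≤ ((Finset.range m).image fun i : ℕ => t + i * d).card := by
        refine Finset.card_le_card fun x hx => ?_
        obtain ⟨i, -, rfl⟩ := Finset.mem_image.mp hx
        refine Finset.mem_image.mpr ⟨i % m, Finset.mem_range.mpr (Nat.mod_lt i hm), ?_⟩
        conv_rhs => rw [← Nat.mod_add_div' i m]
        push_cast
        rw [add_mul, mul_assoc, h, mul_zero, add_zero]
    _ ≤ m := Finset.card_image_le.trans (Finset.card_range m).le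

theorem ZMod.natCast_mul_eq_zero_of_castHom_eq_zero {n m : ℕ} {d : ZMod (n * m)}
    (h : ZMod.castHom (dvd_mul_right n m) (ZMod n) d = 0) : (m : ZMod (n * m)) * d = 0 := by
  rw [← ZMod.intCast_zmod_cast d] at h ⊢
  rw [map_intCast, ZMod.intCast_zmod_eq_zero_iff_dvd] at h
  obtain ⟨s, hs⟩ := h
  rw [hs, ← Int.cast_natCast m, ← Int.cast_mul, ZMod.intCast_zmod_eq_zero_iff_dvd]
  exact ⟨s, by push_cast; ring⟩

theorem Int.two_mul_dvd_of_steps_modEq_in_window {b : ℕ} (hb : 0 < b) {a e : ℤ} {q : ℕ → ℤ}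
    (hwin : ∀ i ≤ b, a ≤ q i ∧ q i < a + b)
    (hstep : ∀ i < b, q (i + 1) - q i ≡ e [ZMOD 2 * b]) : (2 * b : ℤ) ∣ e := by
  have hclose : ∀ i ≤ b, ∀ j ≤ b, |q i - q j| < b := by
    intro i hi j hj
    have := hwin i hi
    have := hwin j hj
    rw [abs_sub_lt_iff]
    constructor <;> linarith
  set δ := q 1 - q 0
  have hδe : δ ≡ e [ZMOD 2 * b] := by simpa using hstep 0 hb
  have hconst : ∀ i < b, q (i + 1) - q i = δ := by
    intro i hi
    have hdvd : (2 * b : ℤ) ∣ (q (i + 1) - q i) - δ := (hδe.trans (hstep i hi).symm).dvd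
    refine sub_eq_zero.mp (Int.eq_zero_of_abs_lt_dvd hdvd ?_)
    calc |q (i + 1) - q i - δ| ≤ |q (i + 1) - q i| + |δ| := abs_sub _ _
      _ < b + b := add_lt_add (hclose _ hi _ hi.le) (hclose 1 hb 0 (Nat.zero_le b))
      _ = 2 * b := by ring
  have htelescope : q b - q 0 = b * δ := by
    rw [← Finset.sum_range_sub, Finset.sum_congr rfl fun i hi => hconst i (Finset.mem_range.mp hi)]
    simp
  have hδ : δ = 0 := by
    have h := hclose b le_rfl 0 (Nat.zero_le b)
    rw [htelescope, abs_mul, Nat.abs_cast] at h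
    exact Int.abs_lt_one_iff.mp (lt_of_mul_lt_mul_left (by simpa using h) (by positivity))
  simpa [hδ] using hδe.dvd

theorem ZMod.eq_zero_of_forall_val_div_eq {b : ℕ} [NeZero b] {y e : ZMod (2 * b)} {c : ℕ}
    (h : ∀ i ≤ b, (y + i * e).val / b = c) : e = 0 := by
  have hdvd : ((2 * b : ℕ) : ℤ) ∣ e.val := by
    push_cast
    refine Int.two_mul_dvd_of_steps_modEq_in_window (Nat.pos_of_neZero b) (a := c * b)
      (q := fun i => (y + i * e).val) (fun i hi => ?_) (fun i _ => ?_)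
    · obtain ⟨hlo, hhi⟩ := (Nat.div_eq_iff (Nat.pos_of_neZero b)).mp (h i hi)
      have hhi' : (y + i * e).val < c * b + b := by have := Nat.pos_of_neZero b; omega
      exact ⟨by exact_mod_cast hlo, by exact_mod_cast hhi'⟩
    · rw [show (2 * b : ℤ) = ((2 * b : ℕ) : ℤ) by push_cast; rfl, ← ZMod.intCast_eq_intCast_iff]
      simp only [Int.cast_sub, Int.cast_natCast, ZMod.natCast_zmod_val]
      push_cast
      ring
  rw [← ZMod.natCast_zmod_val e, ZMod.natCast_eq_zero_iff]
  exact_mod_cast hdvd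

def blockColoring (b : ℕ) [NeZero b] (y : ZMod (2 * b)) : Fin 2 :=
  ⟨y.val / b, Nat.div_lt_of_lt_mul (by simpa [mul_comm] using y.val_lt)⟩

theorem stmt_18 (k : ℕ) (hk : 3 ≤ k) :
    ∃ M : ℕ, k * (k - 1) ≤ M ∧
      ∃ c : ZMod M → Fin 2,
        ∀ A : Finset (ZMod M), IsAP M k A → ¬ ∃ i, ∀ x ∈ A, c x = i := by
  obtain ⟨b, rfl⟩ : ∃ b, k = b + 1 := ⟨k - 1, by omega⟩
  have : NeZero b := ⟨by omega⟩
  let π := ZMod.castHom (dvd_mul_right (2 * b) b) (ZMod (2 * b))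
  refine ⟨2 * b * b, by rw [Nat.add_sub_cancel]; nlinarith, fun x => blockColoring b (π x), ?_⟩
  rintro A ⟨d, hcard, t, rfl⟩ ⟨c, hc⟩
  have hπd : π d = 0 := ZMod.eq_zero_of_forall_val_div_eq (y := π t) (c := c) fun i hi => by
    have := hc _ (Finset.mem_image_of_mem _ (Finset.mem_range.mpr (Nat.lt_succ_of_le hi)))
    simpa [blockColoring, Fin.ext_iff, π] using this
  have := Finset.card_image_range_le_of_natCast_mul_eq_zero t d (b + 1) (Nat.pos_of_neZero b)
    (ZMod.natCast_mul_eq_zero_of_castHom_eq_zero hπd)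
  omega
end

section
/- Let k ≥ 3 be an integer. Then W_c(k,3) > k²; equivalently, there exists an integer M ≥ k² and a 3-coloring of Z_M with no monochromatic k-term cyclic arithmetic progression mod M, for every candidate value N ≤ k² of W_c(k,3). -/
/-!
Take `M = k²` and write `x mod k²` in base `k` with digits `a = x % k` and `b = x / k % k`.
Colour `x` by `third(a) + [b lies in the top third of [0, k)]` mod 3, where `third(a) ∈ {0, 1, 2}`
says which third of `[0, k)` contains `a`. Let `T + iD` (`i < k`) have distinct terms mod `k²`.
If `k ∣ D`, the digit `a` is constant and the `k` digits `b` are distinct, so they meet both the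
top third and the rest: two colours. If `D ≡ k/2 (mod k)`, the even and the odd terms have constant
`a`-digits `a` and `a + k/2 (mod k)`, which lie in different thirds, and each have `k/2 > ⌊k/3⌋`
distinct `b`-digits, so both contain a term without the top-third bonus: two colours. Otherwise
`g = gcd(D, k) ≤ k/3`, and the `a`-digits fill the whole class of `T` mod `g`, which meets each
third; since the bonus is only `0` or `1`, no single colour is compatible with all three thirds.
-/

namespace CyclicAP

def third (k a : ℕ) : ℕ :=
  if 3 * a < k then 0 else if 3 * a < 2 * k then 1 else 2

-- `third k b / 2` is the indicator of `b` lying in the top third.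
def color (k x : ℕ) : ℕ :=
  (third k (x % k) + third k (x / k % k) / 2) % 3

lemma third_le_two (k a : ℕ) : third k a ≤ 2 := by
  unfold third; split_ifs <;> omega

lemma third_eq_zero {k a : ℕ} (h : 3 * a < k) : third k a = 0 := if_pos h

lemma third_eq_one {k a : ℕ} (h₁ : k ≤ 3 * a) (h₂ : 3 * a < 2 * k) : third k a = 1 := by
  unfold third; split_ifs <;> omega

lemma third_eq_two_iff {k a : ℕ} : third k a = 2 ↔ 2 * k ≤ 3 * a := by
  unfold third; split_ifs <;> simp <;> omega

lemma third_ne_third_add_half {k a δ : ℕ} (ha : a < k) (hδ : 2 * δ = k) :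
    third k a ≠ third k ((a + δ) % k) := by
  rcases Nat.lt_or_ge a δ with h | h
  · rw [Nat.mod_eq_of_lt (by omega : a + δ < k)]
    unfold third; split_ifs <;> omega
  · rw [Nat.mod_eq_sub_mod (by omega), Nat.mod_eq_of_lt (by omega : a + δ - k < k)]
    unfold third; split_ifs <;> omega

lemma color_lt_three (k x : ℕ) : color k x < 3 := Nat.mod_lt _ three_pos

lemma color_mod_mul_self (k x : ℕ) : color k (x % (k * k)) = color k x := by
  simp only [color, Nat.mod_mul_right_mod, Nat.mod_mul_right_div_self, Nat.mod_mod]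

lemma color_eq_or (k x : ℕ) :
    color k x = third k (x % k) ∨ color k x = (third k (x % k) + 1) % 3 := by
  have := third_le_two k (x % k)
  have := third_le_two k (x / k % k)
  unfold color; omega

lemma exists_notMem_Ico_of_injOn {f : ℕ → ℕ} {n lo hi : ℕ} (hf : Set.InjOn f (Set.Iio n))
    (h : hi - lo < n) : ∃ j < n, f j ∉ Set.Ico lo hi := by
  by_contra! hmaps
  have := Finset.card_le_card_of_injOn f (s := Finset.range n) (t := Finset.Ico lo hi)
    (fun j hj => by simpa using hmaps j (Finset.mem_range.mp hj)) (by rwa [Finset.coe_range])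
  simp only [Finset.card_range, Nat.card_Ico] at this
  omega

section Progression

variable {k S E : ℕ}

lemma add_mul_mod_of_dvd (hE : k ∣ E) (j : ℕ) : (S + j * E) % k = S % k := by
  obtain ⟨e, rfl⟩ := hE
  rw [show j * (k * e) = k * (j * e) by ring, Nat.add_mul_mod_self_left]

lemma injOn_div_mod_of_dvd {s : Set ℕ} (hE : k ∣ E)
    (hinj : Set.InjOn (fun j => (S + j * E) % (k * k)) s) :
    Set.InjOn (fun j => (S + j * E) / k % k) s := by
  intro i hi j hj h
  apply hinj hi hj
  simp only [Nat.mod_mul, add_mul_mod_of_dvd hE]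
  rw [show (S + i * E) / k % k = (S + j * E) / k % k from h]

lemma exists_color_eq_third {n : ℕ} (hk : 0 < k) (hE : k ∣ E)
    (hinj : Set.InjOn (fun j => (S + j * E) % (k * k)) (Set.Iio n)) (hn : k / 3 < n) :
    ∃ j < n, color k (S + j * E) = third k (S % k) := by
  obtain ⟨j, hj, hb⟩ :=
    exists_notMem_Ico_of_injOn (injOn_div_mod_of_dvd hE hinj) (lo := (2 * k + 2) / 3) (hi := k)
      (by omega)
  have hb' : third k ((S + j * E) / k % k) ≠ 2 := by
    have := Nat.mod_lt ((S + j * E) / k) hk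
    simp only [Set.mem_Ico, not_and, not_lt] at hb
    rw [Ne, third_eq_two_iff]; omega
  refine ⟨j, hj, ?_⟩
  have := third_le_two k ((S + j * E) / k % k)
  have := third_le_two k (S % k)
  rw [color, add_mul_mod_of_dvd hE]; omega

lemma exists_color_eq_third_add_one (hk : 3 ≤ k) (hE : k ∣ E)
    (hinj : Set.InjOn (fun j => (S + j * E) % (k * k)) (Set.Iio k)) :
    ∃ j < k, color k (S + j * E) = (third k (S % k) + 1) % 3 := by
  obtain ⟨j, hj, hb⟩ :=
    exists_notMem_Ico_of_injOn (injOn_div_mod_of_dvd hE hinj) (lo := 0) (hi := (2 * k + 2) / 3)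
      (by omega)
  have hb' : third k ((S + j * E) / k % k) = 2 := by
    simp only [Set.mem_Ico, zero_le, true_and, not_lt] at hb
    rw [third_eq_two_iff]; omega
  exact ⟨j, hj, by rw [color, add_mul_mod_of_dvd hE, hb']⟩

end Progression

section Cases

variable {k T D : ℕ}

lemma injOn_subprogression_two {N r : ℕ} (hinj : Set.InjOn (fun i => (T + i * D) % N) (Set.Iio k))
    (hr : r < 2) : Set.InjOn (fun j => (T + r * D + j * (2 * D)) % N) (Set.Iio (k / 2)) := by
  intro a ha b hb hab
  have hstep : ∀ j, T + r * D + j * (2 * D) = T + (r + 2 * j) * D := fun j => by ring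
  simp only [Set.mem_Iio, hstep] at ha hb hab
  have := hinj (by simp only [Set.mem_Iio]; omega) (by simp only [Set.mem_Iio]; omega) hab
  omega

lemma exists_mod_mem_Ico {lo : ℕ} (hg : Nat.gcd D k < k) (hlo : lo + Nat.gcd D k ≤ k) :
    ∃ i < k, (T + i * D) % k ∈ Set.Ico lo (lo + Nat.gcd D k) := by
  set g := Nat.gcd D k
  have hk : 0 < k := by omega
  have hg0 : 0 < g := Nat.gcd_pos_of_pos_right D hk
  obtain ⟨m, -, hm⟩ := Nat.exists_mul_mod_eq_gcd hg
  have := Nat.mod_lt T hk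
  -- `q = ⌈(k + lo - T % k) / g⌉`, so that `T % k + g q ∈ [k + lo, k + lo + g)`
  obtain ⟨q, r, hr, hqr⟩ : ∃ q r, r < g ∧ g * q + r + T % k + 1 = k + lo + g :=
    ⟨(k + lo + g - 1 - T % k) / g, (k + lo + g - 1 - T % k) % g, Nat.mod_lt _ hg0,
      by have := Nat.div_add_mod (k + lo + g - 1 - T % k) g; omega⟩
  refine ⟨q * m % k, Nat.mod_lt _ hk, ?_⟩
  have hmod : T + q * m % k * D ≡ T % k + g * q [MOD k] :=
    calc T + q * m % k * D ≡ T % k + q * (D * m % k) [MOD k] := by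
          refine (Nat.mod_modEq T k).symm.add ?_
          calc q * m % k * D ≡ q * m * D [MOD k] := (Nat.mod_modEq _ k).mul_right D
            _ = q * (D * m) := by ring
            _ ≡ q * (D * m % k) [MOD k] := (Nat.mod_modEq _ k).symm.mul_left _
      _ = T % k + g * q := by rw [hm, Nat.mul_comm]
  rw [hmod, Nat.mod_eq_sub_mod (by omega), Nat.mod_eq_of_lt (by omega), Set.mem_Ico]
  omega

lemma three_mul_gcd_le (hk : 0 < k) (h₀ : D % k ≠ 0) (h₂ : 2 * (D % k) ≠ k) :
    3 * Nat.gcd D k ≤ k := by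
  set g := Nat.gcd D k
  obtain ⟨m, hm⟩ : g ∣ k := Nat.gcd_dvd_right D k
  obtain ⟨s, hs⟩ : g ∣ D % k :=
    (Nat.dvd_mod_iff (Nat.gcd_dvd_right D k)).mpr (Nat.gcd_dvd_left D k)
  have hsm : s < m := by
    refine Nat.lt_of_mul_lt_mul_left (a := g) ?_
    rw [← hs, ← hm]
    exact Nat.mod_lt D hk
  have hs0 : s ≠ 0 := by rintro rfl; simp_all
  rcases m with _ | _ | _ | m
  · omega
  · omega
  · have : s = 1 := by omega
    subst this
    omega
  · nlinarith

theorem not_monochromatic_of_dvd (hk : 3 ≤ k) (hD : k ∣ D)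
    (hinj : Set.InjOn (fun i => (T + i * D) % (k * k)) (Set.Iio k)) (γ : ℕ) :
    ¬ ∀ i < k, color k (T + i * D) = γ := by
  intro h
  obtain ⟨i, hi, hci⟩ := exists_color_eq_third (by omega) hD hinj (by omega)
  obtain ⟨j, hj, hcj⟩ := exists_color_eq_third_add_one hk hD hinj
  rw [h i hi] at hci
  rw [h j hj] at hcj
  have := third_le_two k (T % k)
  omega

theorem not_monochromatic_of_two_mul_mod_eq (hk : 0 < k) (hD : 2 * (D % k) = k)
    (hinj : Set.InjOn (fun i => (T + i * D) % (k * k)) (Set.Iio k)) (γ : ℕ) :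
    ¬ ∀ i < k, color k (T + i * D) = γ := by
  intro h
  have hE : k ∣ 2 * D := ⟨2 * (D / k) + 1, by linarith [Nat.div_add_mod D k]⟩
  have hinj₀ := injOn_subprogression_two (r := 0) hinj (by norm_num)
  have hinj₁ := injOn_subprogression_two (r := 1) hinj (by norm_num)
  simp only [zero_mul, add_zero, one_mul] at hinj₀ hinj₁
  obtain ⟨i, hi, hci⟩ := exists_color_eq_third hk hE hinj₀ (by omega)
  obtain ⟨j, hj, hcj⟩ := exists_color_eq_third hk hE hinj₁ (by omega)
  have hγi := h (2 * i) (by omega)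
  have hγj := h (2 * j + 1) (by omega)
  rw [show T + 2 * i * D = T + i * (2 * D) by ring, hci] at hγi
  rw [show T + (2 * j + 1) * D = T + D + j * (2 * D) by ring, hcj, Nat.add_mod] at hγj
  exact third_ne_third_add_half (Nat.mod_lt T hk) hD (hγi.trans hγj.symm)

theorem not_monochromatic_of_three_mul_gcd_le (hk : 0 < k) (hg : 3 * Nat.gcd D k ≤ k) (γ : ℕ) :
    ¬ ∀ i < k, color k (T + i * D) = γ := by
  intro h
  have hg0 : 0 < Nat.gcd D k := Nat.gcd_pos_of_pos_right D hk
  have hgk : Nat.gcd D k < k := by omega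
  obtain ⟨i₀, hi₀, ha₀⟩ := exists_mod_mem_Ico (T := T) (lo := 0) hgk (by omega)
  obtain ⟨i₁, hi₁, ha₁⟩ := exists_mod_mem_Ico (T := T) (lo := (k + 2) / 3) hgk (by omega)
  obtain ⟨i₂, hi₂, ha₂⟩ := exists_mod_mem_Ico (T := T) (lo := k - Nat.gcd D k) hgk (by omega)
  simp only [Set.mem_Ico] at ha₀ ha₁ ha₂
  have h₀ := color_eq_or k (T + i₀ * D)
  have h₁ := color_eq_or k (T + i₁ * D)
  have h₂ := color_eq_or k (T + i₂ * D)
  rw [h i₀ hi₀, third_eq_zero (by omega)] at h₀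
  rw [h i₁ hi₁, third_eq_one (by omega) (by omega)] at h₁
  rw [h i₂ hi₂, third_eq_two_iff.mpr (by omega)] at h₂
  omega

theorem not_monochromatic (hk : 3 ≤ k)
    (hinj : Set.InjOn (fun i => (T + i * D) % (k * k)) (Set.Iio k)) (γ : ℕ) :
    ¬ ∀ i < k, color k (T + i * D) = γ := by
  by_cases h₀ : D % k = 0
  · exact not_monochromatic_of_dvd hk (Nat.dvd_of_mod_eq_zero h₀) hinj γ
  by_cases h₂ : 2 * (D % k) = k
  · exact not_monochromatic_of_two_mul_mod_eq (by omega) h₂ hinj γ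
  exact not_monochromatic_of_three_mul_gcd_le (by omega) (three_mul_gcd_le (by omega) h₀ h₂) γ

end Cases

end CyclicAP

lemma IsAPWith.exists_natCast {N k : ℕ} [NeZero N] {A : Finset (ZMod N)} {d : ZMod N}
    (h : IsAPWith N k A d) : ∃ T D : ℕ, Set.InjOn (fun i => (T + i * D) % N) (Set.Iio k) ∧
      ∀ i < k, ((T + i * D : ℕ) : ZMod N) ∈ A := by
  obtain ⟨hcard, t, rfl⟩ := h
  have hcast : ∀ i : ℕ, t + (i : ZMod N) * d = ((t.val + i * d.val : ℕ) : ZMod N) := by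
    intro i; push_cast; simp only [ZMod.natCast_val, ZMod.cast_id', id]
  refine ⟨t.val, d.val, ?_, fun i hi => Finset.mem_image.mpr ⟨i, Finset.mem_range.mpr hi, hcast i⟩⟩
  have hinj : Set.InjOn (fun i : ℕ => t + (i : ZMod N) * d) (Set.Iio k) := by
    rw [← Finset.coe_range]
    exact Finset.card_image_iff.mp (hcard.trans (Finset.card_range k).symm)
  intro i hi j hj hij
  apply hinj hi hj
  simp only [hcast]
  exact (ZMod.natCast_eq_natCast_iff' _ _ N).mpr hij

open CyclicAP in
theorem stmt_19 (k : ℕ) (hk : 3 ≤ k) :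
    ∃ M : ℕ, k ^ 2 ≤ M ∧
      ∃ c : ZMod M → Fin 3,
        ∀ A : Finset (ZMod M), IsAP M k A → ¬ ∃ i, ∀ x ∈ A, c x = i := by
  have : NeZero (k * k) := ⟨by positivity⟩
  refine ⟨k * k, (sq k).le, fun x => ⟨color k x.val, color_lt_three k _⟩, ?_⟩
  rintro A ⟨d, hA⟩ ⟨γ, hγ⟩
  obtain ⟨T, D, hinj, hmem⟩ := hA.exists_natCast
  refine not_monochromatic hk hinj γ fun i hi => ?_
  simpa only [ZMod.val_natCast, color_mod_mul_self] using congrArg Fin.val (hγ _ (hmem i hi))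
end
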